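/- Let G and H be finite connected graphs, each with at least one edge, let f : G → H be a graph homomorphism, v ∈ V(G) a non-isolated vertex, and w = f(v). Then every realizable element commutes with every element of the image of f_*: for every α ∈ π₁²(G,v) and every ϖ ∈ Π(f,v), one has f_*(α)·ϖ = ϖ·f_*(α) in π₁²(H,w). -/

import Mathlib

structure PGraph where
  V : Type
  E : V → V → Prop
  symm : ∀ {x y}, E x y → E y x

def IsGraphHom (G H : PGraph) (f : G.V → H.V) : Prop :=
  ∀ {x y}, G.E x y → H.E (f x) (f y)

structure Walk (G : PGraph) (a b : G.V) where
  len : ℕ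
  toFun : ℕ → G.V
  start_eq : toFun 0 = a
  end_eq : toFun len = b
  adj : ∀ i, i < len → G.E (toFun i) (toFun (i + 1))

structure MultiHom (G H : PGraph) where
  toFun : G.V → Set H.V
  nonempty : ∀ x, (toFun x).Nonempty
  edge : ∀ {x y}, G.E x y → ∀ a ∈ toFun x, ∀ b ∈ toFun y, H.E a b

def MultiHom.le {G H : PGraph} (η η' : MultiHom G H) : Prop :=
  ∀ x, η.toFun x ⊆ η'.toFun x

def SameComponent {G H : PGraph} (η η' : MultiHom G H) : Prop :=
  Relation.ReflTransGen (fun a b => MultiHom.le a b ∨ MultiHom.le b a) η η'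

def ofHom {G H : PGraph} (f : G.V → H.V) (hf : IsGraphHom G H f) : MultiHom G H where
  toFun x := {f x}
  nonempty x := ⟨f x, rfl⟩
  edge := by
    intro x y hxy a ha b hb
    rw [Set.mem_singleton_iff] at ha hb
    subst ha; subst hb
    exact hf hxy

def prodI (G : PGraph) (n : ℕ) : PGraph where
  V := G.V × Fin (n + 1)
  E := fun p q => G.E p.1 q.1 ∧ p.2.val ≤ q.2.val + 1 ∧ q.2.val ≤ p.2.val + 1
  symm := by
    rintro p q ⟨h1, h2, h3⟩
    exact ⟨G.symm h1, h3, h2⟩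

def MoveA {G : PGraph} {a b : G.V} (γ δ : Walk G a b) : Prop :=
  δ.len = γ.len + 2 ∧ ∃ k ≤ γ.len,
    (∀ i ≤ k, δ.toFun i = γ.toFun i) ∧
    (∀ i, k ≤ i → i ≤ γ.len → δ.toFun (i + 2) = γ.toFun i)

def MoveB {G : PGraph} {a b : G.V} (γ δ : Walk G a b) : Prop :=
  γ.len = δ.len ∧ ∃ j, ∀ i ≤ γ.len, i ≠ j → γ.toFun i = δ.toFun i

def Eqv1 {G : PGraph} {a b : G.V} : Walk G a b → Walk G a b → Prop :=
  Relation.EqvGen MoveA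

def Eqv2 {G : PGraph} {a b : G.V} : Walk G a b → Walk G a b → Prop :=
  Relation.EqvGen (fun γ δ => MoveA γ δ ∨ MoveB γ δ)

noncomputable def PGraph.dist (G : PGraph) (a b : G.V) : ℕ :=
  sInf {n | ∃ γ : Walk G a b, γ.len = n}

def PGraph.Connected (G : PGraph) : Prop := ∀ a b : G.V, Nonempty (Walk G a b)

def PGraph.Bipartite (G : PGraph) : Prop :=
  ∃ c : G.V → ZMod 2, ∀ {x y}, G.E x y → c x ≠ c y

def constWalk {G : PGraph} (a : G.V) : Walk G a a :=
  ⟨0, fun _ => a, rfl, rfl, fun i hi => absurd hi (by omega)⟩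

def Walk.concat {G : PGraph} {a b c : G.V} (γ : Walk G a b) (δ : Walk G b c) :
    Walk G a c where
  len := γ.len + δ.len
  toFun i := if i ≤ γ.len then γ.toFun i else δ.toFun (i - γ.len)
  start_eq := by simp [γ.start_eq]
  end_eq := by
    by_cases h : δ.len = 0
    · have hbc : b = c := by
        have h1 := δ.end_eq
        rw [h, δ.start_eq] at h1
        exact h1
      simp [h, γ.end_eq, hbc]
    · have h1 : ¬ (γ.len + δ.len ≤ γ.len) := by omega
      try dsimp only
      rw [if_neg h1]
      have h2 : γ.len + δ.len - γ.len = δ.len := by omega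
      rw [h2, δ.end_eq]
  adj := by
    intro i hi
    try dsimp only
    rcases lt_trichotomy i γ.len with h | h | h
    · rw [if_pos (by omega : i ≤ γ.len), if_pos (by omega : i + 1 ≤ γ.len)]
      exact γ.adj i h
    · have hδ : 0 < δ.len := by omega
      rw [if_pos (by omega : i ≤ γ.len), if_neg (by omega : ¬ i + 1 ≤ γ.len)]
      have h2 : i + 1 - γ.len = 1 := by omega
      rw [h2, h, γ.end_eq]
      have h3 := δ.adj 0 hδ
      rw [δ.start_eq] at h3
      exact h3
    · rw [if_neg (by omega : ¬ i ≤ γ.len), if_neg (by omega : ¬ i + 1 ≤ γ.len)]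
      have h2 : i + 1 - γ.len = (i - γ.len) + 1 := by omega
      rw [h2]
      exact δ.adj (i - γ.len) (by omega)

def Walk.reverse {G : PGraph} {a b : G.V} (γ : Walk G a b) : Walk G b a where
  len := γ.len
  toFun i := γ.toFun (γ.len - i)
  start_eq := by simp [γ.end_eq]
  end_eq := by simp [γ.start_eq]
  adj := by
    intro i hi
    have h1 : γ.len - i = (γ.len - (i + 1)) + 1 := by omega
    have h2 := γ.adj (γ.len - (i + 1)) (by omega)
    rw [← h1] at h2
    exact G.symm h2

def Walk.map {G H : PGraph} (f : G.V → H.V) (hf : IsGraphHom G H f) {a b : G.V}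
    (γ : Walk G a b) : Walk H (f a) (f b) where
  len := γ.len
  toFun i := f (γ.toFun i)
  start_eq := by (try dsimp only); rw [γ.start_eq]
  end_eq := by (try dsimp only); rw [γ.end_eq]
  adj := fun i hi => hf (γ.adj i hi)

def Walk.pow {G : PGraph} {a : G.V} (γ : Walk G a a) : ℕ → Walk G a a
  | 0 => constWalk a
  | n + 1 => (Walk.pow γ n).concat γ

def Walk.zpow {G : PGraph} {a : G.V} (γ : Walk G a a) : ℤ → Walk G a a
  | Int.ofNat n => γ.pow n
  | Int.negSucc n => γ.reverse.pow (n + 1)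
def finClip (n t : ℕ) : Fin (n + 1) := ⟨min t n, by omega⟩

def realizedWalk {G H : PGraph} {n : ℕ} (h : (prodI G n).V → H.V)
    (hh : IsGraphHom (prodI G n) H h) {v v' : G.V} (hvv' : G.E v v')
    {w : H.V} (h0 : h (v, finClip n 0) = w) (hN : h (v, finClip n n) = w) :
    Walk H w w where
  len := 2 * n
  toFun i := if i % 2 = 0 then h (v, finClip n (i / 2)) else h (v', finClip n (i / 2))
  start_eq := by
    try dsimp only
    rw [if_pos (by norm_num : (0:ℕ) % 2 = 0), Nat.zero_div]
    exact h0
  end_eq := by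
    try dsimp only
    rw [if_pos (by omega : (2 * n) % 2 = 0)]
    have h2 : 2 * n / 2 = n := by omega
    rw [h2]
    exact hN
  adj := by
    intro i hi
    try dsimp only
    rcases Nat.even_or_odd i with he | ho
    · obtain ⟨t, ht⟩ := he
      rw [if_pos (by omega : i % 2 = 0), if_neg (by omega : ¬ (i + 1) % 2 = 0)]
      have h4 : (i + 1) / 2 = i / 2 := by omega
      rw [h4]
      refine hh ⟨hvv', ?_, ?_⟩ <;> ((try dsimp only); omega)
    · obtain ⟨t, ht⟩ := ho
      rw [if_neg (by omega : ¬ i % 2 = 0), if_pos (by omega : (i + 1) % 2 = 0)]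
      refine hh ⟨G.symm hvv', ?_, ?_⟩ <;> ((try dsimp only [finClip]); omega)

def Realizable {G H : PGraph} (f : G.V → H.V) (v : G.V) (ω : Walk H (f v) (f v)) : Prop :=
  ∃ (n : ℕ) (h : (prodI G n).V → H.V) (hh : IsGraphHom (prodI G n) H h)
    (hs : ∀ x, h (x, finClip n 0) = f x) (he : ∀ x, h (x, finClip n n) = f x)
    (v' : G.V) (_ : G.E v v'),
    Eqv2 ω (realizedWalk h hh ‹G.E v v'› (hs v) (he v))
def SquareFree (G : PGraph) : Prop :=
  (∀ x, ¬ G.E x x) ∧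
  ¬ ∃ a b c d : G.V, a ≠ b ∧ a ≠ c ∧ a ≠ d ∧ b ≠ c ∧ b ≠ d ∧ c ≠ d ∧
    G.E a b ∧ G.E b c ∧ G.E c d ∧ G.E d a

def nbhd (G : PGraph) (v : G.V) : Set G.V := {y | G.E v y}

def nbhd2 (G : PGraph) (v : G.V) : Set G.V := {z | ∃ y, G.E v y ∧ G.E y z}

def IsGraphCovering (G H : PGraph) (p : G.V → H.V) : Prop :=
  IsGraphHom G H p ∧ ∀ v : G.V, Set.BijOn p (nbhd G v) (nbhd H (p v))

def Is2CoveringMap (G H : PGraph) (p : G.V → H.V) : Prop :=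
  IsGraphHom G H p ∧ ∀ v : G.V,
    Set.BijOn p (nbhd G v) (nbhd H (p v)) ∧ Set.BijOn p (nbhd2 G v) (nbhd2 H (p v))

def pushforward {G H1 H2 : PGraph} (p : H1.V → H2.V) (hp : IsGraphHom H1 H2 p)
    (η : MultiHom G H1) : MultiHom G H2 where
  toFun x := p '' η.toFun x
  nonempty x := (η.nonempty x).image p
  edge := by
    rintro x y hxy a ⟨a', ha', rfl⟩ b ⟨b', hb', rfl⟩
    exact hp (η.edge hxy a' ha' b' hb')

def IsCycleWalk {G : PGraph} {a : G.V} (γ : Walk G a a) : Prop :=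
  3 ≤ γ.len ∧ ∀ i j, i < γ.len → j < γ.len → γ.toFun i = γ.toFun j → i = j

def IsTree (T : PGraph) : Prop :=
  (∀ x, ¬ T.E x x) ∧ (∀ a b : T.V, Nonempty (Walk T a b)) ∧
    ∀ (a : T.V) (γ : Walk T a a), ¬ IsCycleWalk γ

def IsPath {G : PGraph} {a b : G.V} (γ : Walk G a b) : Prop :=
  ∀ i j, i ≤ γ.len → j ≤ γ.len → γ.toFun i = γ.toFun j → i = j

def OnWalk {G : PGraph} {a b : G.V} (γ : Walk G a b) (y : G.V) : Prop :=
  ∃ i ≤ γ.len, γ.toFun i = y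

def CrossHomotopic (G H : PGraph) (f g : G.V → H.V) : Prop :=
  ∃ (n : ℕ) (h : (prodI G n).V → H.V), IsGraphHom (prodI G n) H h ∧
    (∀ x, h (x, finClip n 0) = f x) ∧ (∀ x, h (x, finClip n n) = g x)

def quotGraph (G : PGraph) (Γ : Type) [Group Γ] [MulAction Γ G.V] : PGraph where
  V := Quotient (MulAction.orbitRel Γ G.V)
  E := fun α β => ∃ x y : G.V, Quotient.mk (MulAction.orbitRel Γ G.V) x = α ∧
        Quotient.mk (MulAction.orbitRel Γ G.V) y = β ∧ G.E x y
  symm := by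
    rintro α β ⟨x, y, hx, hy, hxy⟩
    exact ⟨y, x, hy, hx, G.symm hxy⟩

/-!
Work in `G × I_n`. Write `γ × {j}` for the image of `γ` at level `j` and let the ladder be
`(v,0), (v',0), (v,1), (v',1), …, (v,n)`; the homotopy `h` maps the ladder to the realizing walk
and both `γ × {0}` and `γ × {n}` to `f ∘ γ`. So it suffices that
`(γ × {0}) · ladder ≃₂ ladder · (γ × {n})` in `G × I_n`, which is done one rung at a time:
`(γ × {j}) · rung` and `rung · (γ × {j+1})` have the same length and the `(i+1)`-st vertex of the
second is adjacent to the `i`-th vertex of the first, and any two such walks are `≃₂`, by changing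
one vertex at a time from left to right.
-/

namespace Walk

variable {G H : PGraph} {a b c a' b' : G.V}

@[ext]
theorem ext {γ δ : Walk G a b} (hlen : γ.len = δ.len) (hfun : γ.toFun = δ.toFun) : γ = δ := by
  cases γ
  cases δ
  subst hlen hfun
  rfl

def copy (γ : Walk G a b) (ha : a = a') (hb : b = b') : Walk G a' b' where
  len := γ.len
  toFun := γ.toFun
  start_eq := ha ▸ γ.start_eq
  end_eq := hb ▸ γ.end_eq
  adj := γ.adj

theorem concat_len (γ : Walk G a b) (δ : Walk G b c) : (γ.concat δ).len = γ.len + δ.len :=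
  rfl

theorem concat_toFun (γ : Walk G a b) (δ : Walk G b c) (i : ℕ) :
    (γ.concat δ).toFun i = if i ≤ γ.len then γ.toFun i else δ.toFun (i - γ.len) :=
  rfl

theorem concat_assoc {d : G.V} (γ : Walk G a b) (δ : Walk G b c) (ε : Walk G c d) :
    (γ.concat δ).concat ε = γ.concat (δ.concat ε) := by
  ext i
  · exact Nat.add_assoc _ _ _
  · simp only [concat_toFun, concat_len]
    by_cases h₁ : i ≤ γ.len
    · simp only [h₁, show i ≤ γ.len + δ.len by omega, if_true]
    by_cases h₂ : i ≤ γ.len + δ.len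
    · simp only [h₁, h₂, show i - γ.len ≤ δ.len by omega, if_true, if_false]
    · simp only [h₁, h₂, show ¬ i - γ.len ≤ δ.len by omega, if_false, Nat.sub_sub]

theorem map_concat (f : G.V → H.V) (hf : IsGraphHom G H f) (γ : Walk G a b) (δ : Walk G b c) :
    (γ.concat δ).map f hf = (γ.map f hf).concat (δ.map f hf) := by
  ext i
  · rfl
  · exact apply_ite f _ _ _

end Walk

section Eqv2

variable {G H : PGraph} {a b c : G.V}

theorem Eqv2.lift {K : PGraph} {x y : K.V} (F : Walk G a b → Walk K x y)
    (hA : ∀ γ δ, MoveA γ δ → MoveA (F γ) (F δ)) (hB : ∀ γ δ, MoveB γ δ → MoveB (F γ) (F δ))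
    {γ δ : Walk G a b} (h : Eqv2 γ δ) : Eqv2 (F γ) (F δ) := by
  induction h with
  | rel γ δ hm => exact .rel _ _ (hm.imp (hA γ δ) (hB γ δ))
  | refl γ => exact .refl _
  | symm γ δ _ ih => exact .symm _ _ ih
  | trans γ δ ε _ _ ih₁ ih₂ => exact .trans _ _ _ ih₁ ih₂

theorem eqv2_of_eqOn {γ δ : Walk G a b} (hlen : γ.len = δ.len)
    (h : ∀ i ≤ γ.len, γ.toFun i = δ.toFun i) : Eqv2 γ δ :=
  .rel _ _ (Or.inr ⟨hlen, γ.len + 1, fun i hi _ => h i hi⟩)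

theorem MoveA.concat_left (δ : Walk G a b) {γ γ' : Walk G b c} (h : MoveA γ γ') :
    MoveA (δ.concat γ) (δ.concat γ') := by
  obtain ⟨hlen, k, hk, hpre, hsuf⟩ := h
  refine ⟨by simp only [Walk.concat_len, hlen]; omega, δ.len + k,
    by simp only [Walk.concat_len]; omega, fun i hi => ?_, fun i h₁ h₂ => ?_⟩
  · simp only [Walk.concat_toFun]
    split_ifs
    · rfl
    · exact hpre _ (by omega)
  · rw [Walk.concat_len] at h₂
    simp only [Walk.concat_toFun, if_neg (show ¬ i + 2 ≤ δ.len by omega)]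
    split_ifs
    · rw [show i + 2 - δ.len = 0 + 2 by omega, hsuf 0 (by omega) (by omega), γ.start_eq,
        show i = δ.len by omega, δ.end_eq]
    · rw [show i + 2 - δ.len = i - δ.len + 2 by omega, hsuf _ (by omega) (by omega)]

theorem MoveB.concat_left (δ : Walk G a b) {γ γ' : Walk G b c} (h : MoveB γ γ') :
    MoveB (δ.concat γ) (δ.concat γ') := by
  obtain ⟨hlen, j, hj⟩ := h
  refine ⟨by simp only [Walk.concat_len, hlen], δ.len + j, fun i hi hij => ?_⟩
  rw [Walk.concat_len] at hi
  simp only [Walk.concat_toFun]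
  split_ifs
  · rfl
  · exact hj _ (by omega) (by omega)

theorem MoveA.concat_right {γ γ' : Walk G a b} (δ : Walk G b c) (h : MoveA γ γ') :
    MoveA (γ.concat δ) (γ'.concat δ) := by
  obtain ⟨hlen, k, hk, hpre, hsuf⟩ := h
  refine ⟨by simp only [Walk.concat_len, hlen]; omega, k,
    by simp only [Walk.concat_len]; omega, fun i hi => ?_, fun i h₁ h₂ => ?_⟩
  · simp only [Walk.concat_toFun, if_pos (show i ≤ γ.len by omega),
      if_pos (show i ≤ γ'.len by omega)]
    exact hpre i hi
  · rw [Walk.concat_len] at h₂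
    simp only [Walk.concat_toFun]
    split_ifs
    · exact hsuf i h₁ (by omega)
    · omega
    · omega
    · rw [show i + 2 - γ'.len = i - γ.len by omega]

theorem MoveB.concat_right {γ γ' : Walk G a b} (δ : Walk G b c) (h : MoveB γ γ') :
    MoveB (γ.concat δ) (γ'.concat δ) := by
  obtain ⟨hlen, j, hj⟩ := h
  refine ⟨by simp only [Walk.concat_len, hlen], j, fun i hi hij => ?_⟩
  have hlen' : γ.len = γ'.len := hlen
  simp only [Walk.concat_toFun]
  split_ifs
  · exact hj i ‹_› hij
  · omega
  · omega
  · rw [hlen']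

theorem Eqv2.concat_left (δ : Walk G a b) {γ γ' : Walk G b c} (h : Eqv2 γ γ') :
    Eqv2 (δ.concat γ) (δ.concat γ') :=
  h.lift _ (fun _ _ => MoveA.concat_left δ) (fun _ _ => MoveB.concat_left δ)

theorem Eqv2.concat_right {γ γ' : Walk G a b} (δ : Walk G b c) (h : Eqv2 γ γ') :
    Eqv2 (γ.concat δ) (γ'.concat δ) :=
  h.lift (·.concat δ) (fun _ _ => MoveA.concat_right δ) (fun _ _ => MoveB.concat_right δ)

theorem Eqv2.map (f : G.V → H.V) (hf : IsGraphHom G H f) {γ δ : Walk G a b} (h : Eqv2 γ δ) :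
    Eqv2 (γ.map f hf) (δ.map f hf) :=
  h.lift _
    (fun _ _ ⟨hlen, k, hk, hpre, hsuf⟩ => ⟨hlen, k, hk, fun i hi => congrArg f (hpre i hi),
      fun i h₁ h₂ => congrArg f (hsuf i h₁ h₂)⟩)
    (fun _ _ ⟨hlen, j, hj⟩ => ⟨hlen, j, fun i hi hij => congrArg f (hj i hi hij)⟩)

theorem Eqv2.copy {a' b' : G.V} {γ δ : Walk G a b} (h : Eqv2 γ δ) (ha : a = a') (hb : b = b') :
    Eqv2 (γ.copy ha hb) (δ.copy ha hb) :=
  h.lift (·.copy ha hb) (fun _ _ hm => hm) (fun _ _ hm => hm)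

end Eqv2

section Splice

variable {G : PGraph} {a b : G.V}

def Walk.splice (α β : Walk G a b) (hlen : α.len = β.len)
    (hadj : ∀ i < α.len, G.E (α.toFun i) (β.toFun (i + 1))) (k : ℕ) : Walk G a b where
  len := β.len
  toFun i := if i < k then α.toFun i else β.toFun i
  start_eq := by
    split_ifs
    · exact α.start_eq
    · exact β.start_eq
  end_eq := by
    split_ifs
    · rw [← hlen, α.end_eq]
    · exact β.end_eq
  adj i hi := by
    split_ifs with h₁ h₂ h₂
    · exact α.adj i (by omega)
    · exact hadj i (by omega)
    · omega
    · exact β.adj i hi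

theorem eqv2_of_adj_succ {α β : Walk G a b} (hlen : α.len = β.len)
    (hadj : ∀ i < α.len, G.E (α.toFun i) (β.toFun (i + 1))) : Eqv2 α β := by
  have hstep : ∀ k, Eqv2 (α.splice β hlen hadj k) (α.splice β hlen hadj (k + 1)) := fun k =>
    .rel _ _ <| Or.inr ⟨rfl, k, fun i _ hik => by
      change (if i < k then _ else _) = if i < k + 1 then _ else _
      split_ifs <;> first | rfl | omega⟩
  have hchain : ∀ k, Eqv2 (α.splice β hlen hadj 0) (α.splice β hlen hadj k) := by
    intro k
    induction k with
    | zero => exact .refl _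
    | succ k ih => exact .trans _ _ _ ih (hstep k)
  have hβ : α.splice β hlen hadj 0 = β :=
    Walk.ext rfl (funext fun i => by simp [Walk.splice])
  have hα : Eqv2 α (α.splice β hlen hadj (α.len + 1)) :=
    eqv2_of_eqOn hlen fun i hi => (if_pos (by omega)).symm
  have hβα := hchain (α.len + 1)
  rw [hβ] at hβα
  exact .trans _ _ _ hα (.symm _ _ hβα)

end Splice

section Prism

variable {G : PGraph} {v v' : G.V}

-- A bare pair `(x, finClip n j)` has type `G.V × Fin (n + 1)` rather than `(prodI G n).V`,
-- which breaks `rw` on walks in `prodI G n`; this wrapper keeps the latter type.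
def prodI.vert (n : ℕ) (x : G.V) (j : ℕ) : (prodI G n).V :=
  (x, finClip n j)

theorem prodI.adj_vert (n : ℕ) {x y : G.V} (hxy : G.E x y) {s t : ℕ} (hst : s ≤ t + 1)
    (hts : t ≤ s + 1) : (prodI G n).E (prodI.vert n x s) (prodI.vert n y t) :=
  ⟨hxy, by simp only [prodI.vert, finClip]; omega, by simp only [prodI.vert, finClip]; omega⟩

def Walk.atLevel {a b : G.V} (γ : Walk G a b) (n j : ℕ) :
    Walk (prodI G n) (prodI.vert n a j) (prodI.vert n b j) where
  len := γ.len
  toFun i := prodI.vert n (γ.toFun i) j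
  start_eq := by rw [γ.start_eq]
  end_eq := by rw [γ.end_eq]
  adj i hi := prodI.adj_vert n (γ.adj i hi) (by omega) (by omega)

theorem Walk.atLevel_len {a b : G.V} (γ : Walk G a b) (n j : ℕ) :
    (γ.atLevel n j).len = γ.len :=
  rfl

theorem adj_ite_mod_two (hvv' : G.E v v') (i : ℕ) :
    G.E (if i % 2 = 0 then v else v') (if (i + 1) % 2 = 0 then v else v') := by
  split_ifs <;> first | omega | exact hvv' | exact G.symm hvv'

def ladder (hvv' : G.E v v') (n j : ℕ) :
    Walk (prodI G n) (prodI.vert n v 0) (prodI.vert n v j) where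
  len := 2 * j
  toFun i := prodI.vert n (if i % 2 = 0 then v else v') (i / 2)
  start_eq := rfl
  end_eq := by rw [if_pos (Nat.mul_mod_right 2 j), Nat.mul_div_cancel_left j two_pos]
  adj i _ := prodI.adj_vert n (adj_ite_mod_two hvv' i) (by omega) (by omega)

def rung (hvv' : G.E v v') (n j : ℕ) :
    Walk (prodI G n) (prodI.vert n v j) (prodI.vert n v (j + 1)) where
  len := 2
  toFun i := prodI.vert n (if i % 2 = 0 then v else v') (j + i / 2)
  start_eq := rfl
  end_eq := rfl
  adj i _ := prodI.adj_vert n (adj_ite_mod_two hvv' i) (by omega) (by omega)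

theorem ladder_len (hvv' : G.E v v') (n j : ℕ) : (ladder hvv' n j).len = 2 * j :=
  rfl

theorem rung_len (hvv' : G.E v v') (n j : ℕ) : (rung hvv' n j).len = 2 :=
  rfl

theorem ladder_succ (hvv' : G.E v v') (n j : ℕ) :
    ladder hvv' n (j + 1) = (ladder hvv' n j).concat (rung hvv' n j) := by
  ext i
  · change 2 * (j + 1) = 2 * j + 2
    ring
  · rw [Walk.concat_toFun, ladder_len]
    by_cases hi : i ≤ 2 * j
    · exact (if_pos hi).symm
    · rw [if_neg hi]
      change prodI.vert n _ _ = prodI.vert n _ _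
      rw [show (i - 2 * j) % 2 = i % 2 by omega, show j + (i - 2 * j) / 2 = i / 2 by omega]

theorem atLevel_concat_rung (γ : Walk G v v) (hvv' : G.E v v') (n j : ℕ) :
    Eqv2 ((γ.atLevel n j).concat (rung hvv' n j))
      ((rung hvv' n j).concat (γ.atLevel n (j + 1))) := by
  refine eqv2_of_adj_succ (Nat.add_comm _ _) fun i hi => ?_
  change i < γ.len + 2 at hi
  rw [Walk.concat_toFun, Walk.concat_toFun, Walk.atLevel_len, rung_len]
  by_cases h₁ : i ≤ γ.len <;> by_cases h₂ : i + 1 ≤ 2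
  · rw [if_pos h₁, if_pos h₂]
    refine prodI.adj_vert n ?_ (by omega) (by omega)
    obtain rfl | rfl : i = 0 ∨ i = 1 := by omega
    · rw [γ.start_eq, if_neg (by omega)]
      exact hvv'
    · have h := γ.adj 0 (by omega)
      rw [γ.start_eq] at h
      rw [if_pos (by omega)]
      exact G.symm h
  · rw [if_pos h₁, if_neg h₂]
    refine prodI.adj_vert n ?_ (by omega) (by omega)
    have h := γ.adj (i + 1 - 2) (by omega)
    rw [show i + 1 - 2 + 1 = i by omega] at h
    exact G.symm h
  · rw [if_neg h₁, if_pos h₂]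
    refine prodI.adj_vert n ?_ (by omega) (by omega)
    rw [if_neg (by omega), if_pos (by omega)]
    exact G.symm hvv'
  · rw [if_neg h₁, if_neg h₂]
    refine prodI.adj_vert n ?_ (by omega) (by omega)
    rw [if_neg (by omega), show i + 1 - 2 = γ.len by omega, γ.end_eq]
    exact G.symm hvv'

theorem atLevel_concat_ladder (γ : Walk G v v) (hvv' : G.E v v') (n j : ℕ) :
    Eqv2 ((γ.atLevel n 0).concat (ladder hvv' n j))
      ((ladder hvv' n j).concat (γ.atLevel n j)) := by
  induction j with
  | zero =>
    refine eqv2_of_eqOn (Nat.add_comm _ _) fun i hi => ?_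
    rw [Walk.concat_toFun, Walk.concat_toFun, Walk.atLevel_len, ladder_len]
    rcases Nat.eq_zero_or_pos i with rfl | hpos
    · rw [if_pos (Nat.zero_le _), if_pos le_rfl, Walk.start_eq, Walk.start_eq]
    · rw [if_pos (show i ≤ γ.len by exact hi), if_neg (by omega), Nat.mul_zero, Nat.sub_zero]
  | succ j ih =>
    rw [ladder_succ, Walk.concat_assoc (ladder hvv' n j), ← Walk.concat_assoc (γ.atLevel n 0)]
    refine .trans _ _ _ (ih.concat_right _) ?_
    rw [Walk.concat_assoc]
    exact (atLevel_concat_rung γ hvv' n j).concat_left _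

end Prism

section Homotopy

variable {G H : PGraph} {n : ℕ} {h : (prodI G n).V → H.V} (hh : IsGraphHom (prodI G n) H h)

theorem realizedWalk_eq_copy_map_ladder {v v' : G.V} (hvv' : G.E v v') {w : H.V}
    (h0 : h (v, finClip n 0) = w) (hN : h (v, finClip n n) = w) :
    realizedWalk h hh hvv' h0 hN = ((ladder hvv' n n).map h hh).copy h0 hN := by
  ext i
  · rfl
  · change (if i % 2 = 0 then _ else _) =
      h (prodI.vert n (if i % 2 = 0 then v else v') (i / 2))
    split_ifs <;> rfl

theorem Walk.copy_map_atLevel (f : G.V → H.V) (hf : IsGraphHom G H f) {j : ℕ}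
    (hj : ∀ x, h (x, finClip n j) = f x) {a b : G.V} (γ : Walk G a b) :
    ((γ.atLevel n j).map h hh).copy (hj a) (hj b) = γ.map f hf :=
  Walk.ext rfl (funext fun _ => hj _)

theorem eqv2_map_concat_realizedWalk_comm (f : G.V → H.V) (hf : IsGraphHom G H f)
    (hs : ∀ x, h (x, finClip n 0) = f x) (he : ∀ x, h (x, finClip n n) = f x) {v v' : G.V}
    (hvv' : G.E v v') (γ : Walk G v v) :
    Eqv2 ((γ.map f hf).concat (realizedWalk h hh hvv' (hs v) (he v)))
      ((realizedWalk h hh hvv' (hs v) (he v)).concat (γ.map f hf)) := by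
  have key := ((atLevel_concat_ladder γ hvv' n n).map h hh).copy (hs v) (he v)
  rw [Walk.map_concat, Walk.map_concat] at key
  rw [realizedWalk_eq_copy_map_ladder hh hvv' (hs v) (he v)]
  nth_rewrite 1 [← Walk.copy_map_atLevel hh f hf hs γ]
  rw [← Walk.copy_map_atLevel hh f hf he γ]
  exact key

end Homotopy

theorem statement_10_general (G H : PGraph)
    (f : G.V → H.V) (hf : IsGraphHom G H f)
    (v : G.V)
    (γ : Walk G v v) (ω : Walk H (f v) (f v)) (hω : Realizable f v ω) :
    Eqv2 ((Walk.map f hf γ).concat ω) (ω.concat (Walk.map f hf γ)) := by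
  obtain ⟨n, h, hh, hs, he, v', hvv', hωρ⟩ := hω
  exact .trans _ _ _ (hωρ.concat_left _)
    (.trans _ _ _ (eqv2_map_concat_realizedWalk_comm hh f hf hs he hvv' γ)
      (.symm _ _ (hωρ.concat_right _)))

theorem statement_10 (G H : PGraph) [Finite G.V] [Finite H.V]
    (hGconn : PGraph.Connected G) (hHconn : PGraph.Connected H)
    (hGe : ∃ x y : G.V, G.E x y) (hHe : ∃ x y : H.V, H.E x y)
    (f : G.V → H.V) (hf : IsGraphHom G H f)
    (v : G.V) (hv : ∃ v' : G.V, G.E v v')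
    (γ : Walk G v v) (ω : Walk H (f v) (f v)) (hω : Realizable f v ω) :
    Eqv2 ((Walk.map f hf γ).concat ω) (ω.concat (Walk.map f hf γ)) :=
  statement_10_general G H f hf v γ ω hω
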